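/- arXiv:2310.08611 — 2 statements merged into one kernel-verified Lean document; each statement's English description precedes it below -/
import Mathlib

section
/- Let n ≥ 1, let V be a real inner product space, let g : ℝ^{1+n} → ℝ^{(n+1)×(n+1)} be a C¹ family of symmetric matrices and Φ : ℝ^{1+n} → V be C². Then at every point, Σ_{μ=0}^{n} ∂_μ (T^μ_0(Φ)) = ⟨ Σ_{μ,α=0}^{n} g^{μα} ∂_μ ∂_α Φ, ∂_0 Φ ⟩ + (1/2) Σ_{α=0}^{n} (∂_0 g^{0α}) ⟨∂_α Φ, ∂_0 Φ⟩ + Σ_{j=1}^{n} Σ_{α=0}^{n} (∂_j g^{jα}) ⟨∂_α Φ, ∂_0 Φ⟩ − (1/2) Σ_{j=1}^{n} Σ_{β=0}^{n} (∂_0 g^{jβ}) ⟨∂_j Φ, ∂_β Φ⟩. -/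
open scoped BigOperators RealInnerProductSpace

noncomputable section

/-- Standard basis vector of ℝ^{1+n}. -/
def basisVec (n : ℕ) (μ : Fin (n+1)) : Fin (n+1) → ℝ := Pi.single μ 1

/-- Partial derivative ∂_μ of a map defined on ℝ^{1+n}. -/
def pdv {n : ℕ} {V : Type*} [NormedAddCommGroup V] [NormedSpace ℝ V]
    (Φ : (Fin (n+1) → ℝ) → V) (μ : Fin (n+1)) (p : Fin (n+1) → ℝ) : V :=
  fderiv ℝ Φ p (basisVec n μ)

/-- Second partial derivative ∂_μ ∂_α. -/
def pdv2 {n : ℕ} {V : Type*} [NormedAddCommGroup V] [NormedSpace ℝ V]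
    (Φ : (Fin (n+1) → ℝ) → V) (μ α : Fin (n+1)) (p : Fin (n+1) → ℝ) : V :=
  fderiv ℝ (fun q => fderiv ℝ Φ q (basisVec n α)) p (basisVec n μ)

/-- The energy tensor T^μ_ν(Φ) built from the (inverse) metric g. -/
def Tup {n : ℕ} {V : Type*} [NormedAddCommGroup V] [InnerProductSpace ℝ V]
    (g : (Fin (n+1) → ℝ) → Fin (n+1) → Fin (n+1) → ℝ)
    (Φ : (Fin (n+1) → ℝ) → V) (μ ν : Fin (n+1)) (p : Fin (n+1) → ℝ) : ℝ :=
  (∑ α, g p μ α * ⟪pdv Φ α p, pdv Φ ν p⟫)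
    - (1/2) * (if μ = ν then (1:ℝ) else 0) *
        ∑ α, ∑ β, g p α β * ⟪pdv Φ α p, pdv Φ β p⟫

/-!
Expand `∂_μ T^μ_ν` by the product rule. By the symmetry of second derivatives, the term
`g^{μα} ⟨∂_α Φ, ∂_μ ∂_ν Φ⟩` equals `g^{αβ} ⟨∂_ν ∂_α Φ, ∂_β Φ⟩`, and by the symmetry of `g` this is
exactly the second-order part of `½ ∂_ν (g^{αβ} ⟨∂_α Φ, ∂_β Φ⟩)`, so the two cancel. What remains
is `⟨g^{μα} ∂_μ ∂_α Φ, ∂_ν Φ⟩` plus first derivatives of `g`; for `ν = 0` the sums over `μ` and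
`α` split into the time index and the spatial indices.
-/

section Calculus

variable {n : ℕ} {E : Type*} [NormedAddCommGroup E] [NormedSpace ℝ E] {p : Fin (n+1) → ℝ}

lemma pdv_pdv (Φ : (Fin (n+1) → ℝ) → E) (μ α : Fin (n+1)) :
    pdv (pdv Φ α) μ p = pdv2 Φ μ α p := rfl

lemma pdv2_comm {Φ : (Fin (n+1) → ℝ) → E} (hΦ : ContDiff ℝ 2 Φ) (μ α : Fin (n+1)) :
    pdv2 Φ μ α p = pdv2 Φ α μ p := by
  have hd : DifferentiableAt ℝ (fderiv ℝ Φ) p :=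
    ((hΦ.fderiv_right le_rfl).differentiable one_ne_zero).differentiableAt
  have hpdv2 : ∀ ν β, pdv2 Φ ν β p = fderiv ℝ (fderiv ℝ Φ) p (basisVec n ν) (basisVec n β) := by
    intro ν β
    simp [pdv2, fderiv_clm_apply hd (differentiableAt_const _)]
  rw [hpdv2, hpdv2]
  exact hΦ.contDiffAt.isSymmSndFDerivAt (by simp) _ _

lemma ContDiff.differentiableAt_pdv {Φ : (Fin (n+1) → ℝ) → E} (hΦ : ContDiff ℝ 2 Φ) (α : Fin (n+1)) :
    DifferentiableAt ℝ (pdv Φ α) p := by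
  have h : ContDiff ℝ 1 (fun q => fderiv ℝ Φ q (basisVec n α)) :=
    (hΦ.fderiv_right le_rfl).clm_apply contDiff_const
  exact (h.differentiable one_ne_zero).differentiableAt

lemma pdv_sub {u v : (Fin (n+1) → ℝ) → E} (hu : DifferentiableAt ℝ u p) (hv : DifferentiableAt ℝ v p)
    (μ : Fin (n+1)) :
    pdv (fun q => u q - v q) μ p = pdv u μ p - pdv v μ p := by
  simp only [pdv, fderiv_fun_sub hu hv, sub_apply]

lemma pdv_sum {ι : Type*} (s : Finset ι)
    {u : ι → (Fin (n+1) → ℝ) → E} (hu : ∀ i ∈ s, DifferentiableAt ℝ (u i) p) (μ : Fin (n+1)) :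
    pdv (fun q => ∑ i ∈ s, u i q) μ p = ∑ i ∈ s, pdv (u i) μ p := by
  simp only [pdv, fderiv_fun_sum hu, sum_apply]

lemma pdv_const_mul {f : (Fin (n+1) → ℝ) → ℝ} (hf : DifferentiableAt ℝ f p) (c : ℝ)
    (μ : Fin (n+1)) :
    pdv (fun q => c * f q) μ p = c * pdv f μ p := by
  simp only [pdv, fderiv_const_mul hf, smul_apply, smul_eq_mul]

lemma pdv_mul {f h : (Fin (n+1) → ℝ) → ℝ} (hf : DifferentiableAt ℝ f p)
    (hh : DifferentiableAt ℝ h p) (μ : Fin (n+1)) :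
    pdv (fun q => f q * h q) μ p = pdv f μ p * h p + f p * pdv h μ p := by
  simp only [pdv, fderiv_fun_mul hf hh, add_apply, smul_apply, smul_eq_mul]
  ring

lemma pdv_inner {V : Type*} [NormedAddCommGroup V] [InnerProductSpace ℝ V]
    {u v : (Fin (n+1) → ℝ) → V} (hu : DifferentiableAt ℝ u p) (hv : DifferentiableAt ℝ v p)
    (μ : Fin (n+1)) :
    pdv (fun q => ⟪u q, v q⟫) μ p = ⟪pdv u μ p, v p⟫ + ⟪u p, pdv v μ p⟫ := by
  rw [pdv, fderiv_inner_apply ℝ hu hv, add_comm]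
  rfl

end Calculus

section EnergyTensor

variable {n : ℕ} {V : Type*} [NormedAddCommGroup V] [InnerProductSpace ℝ V]
  {g : (Fin (n+1) → ℝ) → Fin (n+1) → Fin (n+1) → ℝ} {Φ : (Fin (n+1) → ℝ) → V}
  {p : Fin (n+1) → ℝ}

def gradNormSq (g : (Fin (n+1) → ℝ) → Fin (n+1) → Fin (n+1) → ℝ)
    (Φ : (Fin (n+1) → ℝ) → V) (q : Fin (n+1) → ℝ) : ℝ :=
  ∑ α, ∑ β, g q α β * ⟪pdv Φ α q, pdv Φ β q⟫

lemma pdv_mul_inner_pdv {f : (Fin (n+1) → ℝ) → ℝ} (hf : DifferentiableAt ℝ f p)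
    (hΦ : ContDiff ℝ 2 Φ) (α β μ : Fin (n+1)) :
    pdv (fun q => f q * ⟪pdv Φ α q, pdv Φ β q⟫) μ p
      = pdv f μ p * ⟪pdv Φ α p, pdv Φ β p⟫
        + f p * (⟪pdv2 Φ μ α p, pdv Φ β p⟫ + ⟪pdv Φ α p, pdv2 Φ μ β p⟫) := by
  have hα := hΦ.differentiableAt_pdv (p := p) α
  have hβ := hΦ.differentiableAt_pdv (p := p) β
  rw [pdv_mul hf (hα.inner ℝ hβ), pdv_inner hα hβ, pdv_pdv, pdv_pdv]

lemma differentiableAt_mul_inner_pdv {f : (Fin (n+1) → ℝ) → ℝ}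
    (hf : DifferentiableAt ℝ f p) (hΦ : ContDiff ℝ 2 Φ) (α β : Fin (n+1)) :
    DifferentiableAt ℝ (fun q => f q * ⟪pdv Φ α q, pdv Φ β q⟫) p :=
  hf.mul ((hΦ.differentiableAt_pdv α).inner ℝ (hΦ.differentiableAt_pdv β))

lemma differentiableAt_gradNormSq (hg : ∀ α β, DifferentiableAt ℝ (fun q => g q α β) p)
    (hΦ : ContDiff ℝ 2 Φ) : DifferentiableAt ℝ (gradNormSq g Φ) p :=
  DifferentiableAt.fun_sum fun α _ => DifferentiableAt.fun_sum fun β _ =>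
    differentiableAt_mul_inner_pdv (hg α β) hΦ α β

lemma pdv_gradNormSq (hgsymm : ∀ q α β, g q α β = g q β α)
    (hg : ∀ α β, DifferentiableAt ℝ (fun q => g q α β) p) (hΦ : ContDiff ℝ 2 Φ)
    (μ : Fin (n+1)) :
    pdv (gradNormSq g Φ) μ p
      = ∑ α, ∑ β, pdv (fun q => g q α β) μ p * ⟪pdv Φ α p, pdv Φ β p⟫
        + 2 * ∑ α, ∑ β, g p α β * ⟪pdv2 Φ μ α p, pdv Φ β p⟫ := by
  have hsum : pdv (gradNormSq g Φ) μ p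
      = ∑ α, ∑ β, (pdv (fun q => g q α β) μ p * ⟪pdv Φ α p, pdv Φ β p⟫
          + g p α β * (⟪pdv2 Φ μ α p, pdv Φ β p⟫ + ⟪pdv Φ α p, pdv2 Φ μ β p⟫)) := by
    unfold gradNormSq
    rw [pdv_sum _ fun α _ => DifferentiableAt.fun_sum fun β _ =>
      differentiableAt_mul_inner_pdv (hg α β) hΦ α β]
    refine Finset.sum_congr rfl fun α _ => ?_
    rw [pdv_sum _ fun β _ => differentiableAt_mul_inner_pdv (hg α β) hΦ α β]
    exact Finset.sum_congr rfl fun β _ => pdv_mul_inner_pdv (hg α β) hΦ α β μ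
  have hswap : ∑ α, ∑ β, g p α β * ⟪pdv Φ α p, pdv2 Φ μ β p⟫
      = ∑ α, ∑ β, g p α β * ⟪pdv2 Φ μ α p, pdv Φ β p⟫ := by
    rw [Finset.sum_comm]
    refine Finset.sum_congr rfl fun β _ => Finset.sum_congr rfl fun α _ => ?_
    rw [hgsymm, real_inner_comm]
  simp only [hsum, mul_add, Finset.sum_add_distrib, hswap]
  ring

lemma pdv_Tup (hg : ∀ α β, DifferentiableAt ℝ (fun q => g q α β) p) (hΦ : ContDiff ℝ 2 Φ)
    (μ ν : Fin (n+1)) :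
    pdv (Tup g Φ μ ν) μ p
      = ∑ α, (pdv (fun q => g q μ α) μ p * ⟪pdv Φ α p, pdv Φ ν p⟫
          + g p μ α * (⟪pdv2 Φ μ α p, pdv Φ ν p⟫ + ⟪pdv Φ α p, pdv2 Φ μ ν p⟫))
        - (1/2) * (if μ = ν then (1:ℝ) else 0) * pdv (gradNormSq g Φ) μ p := by
  have hflux : ∀ α ∈ Finset.univ,
      DifferentiableAt ℝ (fun q => g q μ α * ⟪pdv Φ α q, pdv Φ ν q⟫) p :=
    fun α _ => differentiableAt_mul_inner_pdv (hg μ α) hΦ α ν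
  have hL := differentiableAt_gradNormSq hg hΦ
  change pdv (fun q => ∑ α, g q μ α * ⟪pdv Φ α q, pdv Φ ν q⟫
    - (1/2) * (if μ = ν then (1:ℝ) else 0) * gradNormSq g Φ q) μ p = _
  rw [pdv_sub (DifferentiableAt.fun_sum hflux) (hL.const_mul _), pdv_sum _ hflux,
    pdv_const_mul hL]
  exact congrArg (· - _) (Finset.sum_congr rfl fun α _ => pdv_mul_inner_pdv (hg μ α) hΦ α ν μ)

theorem sum_pdv_Tup (hgsymm : ∀ q α β, g q α β = g q β α)
    (hg : ∀ α β, DifferentiableAt ℝ (fun q => g q α β) p) (hΦ : ContDiff ℝ 2 Φ)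
    (ν : Fin (n+1)) :
    ∑ μ, pdv (Tup g Φ μ ν) μ p
      = ⟪∑ μ, ∑ α, g p μ α • pdv2 Φ μ α p, pdv Φ ν p⟫
        + ∑ μ, ∑ α, pdv (fun q => g q μ α) μ p * ⟪pdv Φ α p, pdv Φ ν p⟫
        - (1/2) * ∑ α, ∑ β, pdv (fun q => g q α β) ν p * ⟪pdv Φ α p, pdv Φ β p⟫ := by
  have hwave : ∑ μ, ∑ α, g p μ α * ⟪pdv2 Φ μ α p, pdv Φ ν p⟫
      = ⟪∑ μ, ∑ α, g p μ α • pdv2 Φ μ α p, pdv Φ ν p⟫ := by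
    simp only [sum_inner, real_inner_smul_left]
  have hcancel : ∑ μ, ∑ α, g p μ α * ⟪pdv Φ α p, pdv2 Φ μ ν p⟫
      = ∑ α, ∑ β, g p α β * ⟪pdv2 Φ ν α p, pdv Φ β p⟫ := by
    refine Finset.sum_congr rfl fun μ _ => Finset.sum_congr rfl fun α _ => ?_
    rw [pdv2_comm hΦ μ ν, real_inner_comm]
  simp only [pdv_Tup hg hΦ, Finset.sum_sub_distrib, ite_mul, mul_ite, zero_mul,
    mul_zero, Finset.sum_ite_eq', Finset.mem_univ, if_true, pdv_gradNormSq hgsymm hg hΦ,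
    mul_add, Finset.sum_add_distrib, hwave, hcancel]
  ring

end EnergyTensor

theorem stmt1_general {n : ℕ} {V : Type*} [NormedAddCommGroup V] [InnerProductSpace ℝ V]
    (g : (Fin (n+1) → ℝ) → Fin (n+1) → Fin (n+1) → ℝ)
    (hgsymm : ∀ p μ ν, g p μ ν = g p ν μ)
    (hg : ∀ μ ν, ContDiff ℝ 1 (fun p => g p μ ν))
    (Φ : (Fin (n+1) → ℝ) → V) (hΦ : ContDiff ℝ 2 Φ)
    (p : Fin (n+1) → ℝ) :
    (∑ μ, pdv (Tup g Φ μ 0) μ p)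
      = ⟪∑ μ, ∑ α, g p μ α • pdv2 Φ μ α p, pdv Φ 0 p⟫
        + (1/2) * (∑ α, pdv (fun q => g q 0 α) 0 p * ⟪pdv Φ α p, pdv Φ 0 p⟫)
        + (∑ j : Fin n, ∑ α, pdv (fun q => g q j.succ α) j.succ p * ⟪pdv Φ α p, pdv Φ 0 p⟫)
        - (1/2) * (∑ j : Fin n, ∑ β, pdv (fun q => g q j.succ β) 0 p * ⟪pdv Φ j.succ p, pdv Φ β p⟫) := by
  have hgd : ∀ μ ν, DifferentiableAt ℝ (fun q => g q μ ν) p :=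
    fun μ ν => ((hg μ ν).differentiable one_ne_zero).differentiableAt
  have htime : ∑ β, pdv (fun q => g q 0 β) 0 p * ⟪pdv Φ 0 p, pdv Φ β p⟫
      = ∑ α, pdv (fun q => g q 0 α) 0 p * ⟪pdv Φ α p, pdv Φ 0 p⟫ :=
    Finset.sum_congr rfl fun β _ => by rw [real_inner_comm]
  rw [sum_pdv_Tup hgsymm hgd hΦ, Fin.sum_univ_succ (fun μ => ∑ α, _ * _),
    Fin.sum_univ_succ (fun α => ∑ β, _ * _), htime]
  ring

/-- divergence identity for the energy tensor, with ν = 0,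
split into time and space derivatives of the metric. -/
theorem stmt1 {n : ℕ} (hn : 1 ≤ n) {V : Type*} [NormedAddCommGroup V] [InnerProductSpace ℝ V]
    (g : (Fin (n+1) → ℝ) → Fin (n+1) → Fin (n+1) → ℝ)
    (hgsymm : ∀ p μ ν, g p μ ν = g p ν μ)
    (hg : ∀ μ ν, ContDiff ℝ 1 (fun p => g p μ ν))
    (Φ : (Fin (n+1) → ℝ) → V) (hΦ : ContDiff ℝ 2 Φ)
    (p : Fin (n+1) → ℝ) :
    (∑ μ, pdv (Tup g Φ μ 0) μ p)
      = ⟪∑ μ, ∑ α, g p μ α • pdv2 Φ μ α p, pdv Φ 0 p⟫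
        + (1/2) * (∑ α, pdv (fun q => g q 0 α) 0 p * ⟪pdv Φ α p, pdv Φ 0 p⟫)
        + (∑ j : Fin n, ∑ α, pdv (fun q => g q j.succ α) j.succ p * ⟪pdv Φ α p, pdv Φ 0 p⟫)
        - (1/2) * (∑ j : Fin n, ∑ β, pdv (fun q => g q j.succ β) 0 p * ⟪pdv Φ j.succ p, pdv Φ β p⟫) :=
  stmt1_general g hgsymm hg Φ hΦ p
end
end

section
/- Weighted conservation law on a time slab: let n ≥ 2, let V be a real inner product space, let g : ℝ^{1+n} → ℝ^{(n+1)×(n+1)} be a C¹ family of symmetric matrices, let Φ : ℝ^{1+n} → V be C², let ω : ℝ → ℝ be C¹, and let t₁ ≤ t₂. Assume the support of Φ intersected with [t₁,t₂] × ℝⁿ is compact. Then, writing q := |x| − τ and T_{r0} := Σ_{j=1}^{n} (x_j/|x|) T_{j0} (defined for x ≠ 0, hence almost everywhere), ∫_{ℝⁿ} T_{00}(Φ)(t₂,x) ω(|x|−t₂) dx + ∫_{t₁}^{t₂} ∫_{ℝⁿ} ( T_{00}(Φ) + T_{r0}(Φ) )(τ,x) ω′(q) dx dτ + ∫_{t₁}^{t₂}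 ∫_{ℝⁿ} ( Σ_{μ=0}^{n} ∂_μ T^μ_0(Φ) )(τ,x) ω(q) dx dτ = ∫_{ℝⁿ} T_{00}(Φ)(t₁,x) ω(|x|−t₁) dx. -/
open scoped BigOperators RealInnerProductSpace
open MeasureTheory

noncomputable section

/-- The Minkowski matrix m = diag(−1,1,…,1). -/
def mink (n : ℕ) (μ ν : Fin (n+1)) : ℝ :=
  if μ = ν then (if μ = 0 then -1 else 1) else 0

/-- The lowered energy tensor T_{μν} := m_{μμ} T^μ_ν (no sum; m diagonal). -/
def Tlow {n : ℕ} {V : Type*} [NormedAddCommGroup V] [InnerProductSpace ℝ V]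
    (g : (Fin (n+1) → ℝ) → Fin (n+1) → Fin (n+1) → ℝ)
    (Φ : (Fin (n+1) → ℝ) → V) (μ ν : Fin (n+1)) (p : Fin (n+1) → ℝ) : ℝ :=
  mink n μ μ * Tup g Φ μ ν p

/-- The spatial radius r = |x|. -/
def rad (n : ℕ) (x : Fin n → ℝ) : ℝ := Real.sqrt (∑ i, (x i)^2)

open Set Function
open scoped Interval

/-!
The weighted current `J^μ = T^μ_0(Φ) ω(r - t)` has spacetime divergence
`(T_00 + T_r0) ω'(q) + (∂_μ T^μ_0) ω(q)` off the axis `r = 0`. On each time slice the spatial part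
`∂_j J^j` integrates to zero by the divergence theorem on a large box (the axis meets the slice in
the null set `{0}`, a countable exceptional set for the box theorem), while by Fubini and the
fundamental theorem of calculus the time part `∂_t J^0` integrates over the slab to the difference
of the weighted energies `∫ T_00 ω` at the two ends.
-/

section Coordinates

variable {n : ℕ}

theorem hasDerivAt_finCons_left (x : Fin n → ℝ) (τ : ℝ) :
    HasDerivAt (fun s : ℝ => (Fin.cons s x : Fin (n+1) → ℝ)) (basisVec n 0) τ := by
  refine hasDerivAt_pi.2 fun i => ?_
  induction i using Fin.cases with
  | zero => simpa [basisVec] using hasDerivAt_id' τ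
  | succ j => simpa [basisVec] using hasDerivAt_const τ (x j)

theorem finCons_zero_single (j : Fin n) :
    (Fin.cons 0 (Pi.single j 1) : Fin (n+1) → ℝ) = basisVec n j.succ := by
  ext i
  induction i using Fin.cases with
  | zero => simp [basisVec]
  | succ k => simp [basisVec, Pi.single_apply]

theorem isCompact_setOf_finCons_mem {C : Set (Fin (n+1) → ℝ)} (hC : IsCompact C) :
    IsCompact {q : ℝ × (Fin n → ℝ) | Fin.cons q.1 q.2 ∈ C} :=
  (Fin.consEquivL ℝ fun _ : Fin (n+1) => ℝ).toHomeomorph.isCompact_preimage.2 hC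

theorem continuous_rad : Continuous (rad n) := by
  unfold rad; fun_prop

theorem rad_pos {x : Fin n → ℝ} (hx : x ≠ 0) : 0 < rad n x := by
  obtain ⟨i, hi⟩ := Function.ne_iff.1 hx
  exact Real.sqrt_pos.2 <| lt_of_lt_of_le (pow_two_pos_of_ne_zero hi)
    (Finset.single_le_sum (fun j _ => sq_nonneg (x j)) (Finset.mem_univ i))

theorem hasFDerivAt_rad {x : Fin n → ℝ} (hx : x ≠ 0) :
    HasFDerivAt (rad n)
      ((rad n x)⁻¹ • ∑ i, x i • ContinuousLinearMap.proj (R := ℝ) (φ := fun _ : Fin n => ℝ) i)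
      x := by
  have hS : HasFDerivAt (fun y : Fin n → ℝ => ∑ i, y i ^ 2)
      (∑ i, (2 * x i) • ContinuousLinearMap.proj (R := ℝ) (φ := fun _ : Fin n => ℝ) i) x :=
    HasFDerivAt.fun_sum fun i _ => by
      simpa using (hasFDerivAt_apply (𝕜 := ℝ) (F' := fun _ : Fin n => ℝ) i x).pow 2
  have hr := rad_pos hx
  refine (hS.sqrt (Real.sqrt_pos.1 hr).ne').congr_fderiv ?_
  rw [Finset.smul_sum, Finset.smul_sum]
  refine Finset.sum_congr rfl fun i _ => ?_
  rw [smul_smul, smul_smul]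
  congr 1
  simp only [rad] at hr ⊢
  field_simp

theorem abs_div_rad_le_one (x : Fin n → ℝ) (j : Fin n) : |x j / rad n x| ≤ 1 := by
  unfold rad
  rw [abs_div, abs_of_nonneg (Real.sqrt_nonneg _), ← Real.sqrt_sq_eq_abs]
  refine div_le_one_of_le₀ ?_ (Real.sqrt_nonneg _)
  exact Real.sqrt_le_sqrt
    (Finset.single_le_sum (fun i _ => sq_nonneg (x i)) (Finset.mem_univ j))

end Coordinates

section EnergyTensor

variable {n : ℕ} {V : Type*} [NormedAddCommGroup V] [InnerProductSpace ℝ V]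
  {g : (Fin (n+1) → ℝ) → Fin (n+1) → Fin (n+1) → ℝ} {Φ : (Fin (n+1) → ℝ) → V}

theorem Tlow_zero_left (ν : Fin (n+1)) (p : Fin (n+1) → ℝ) :
    Tlow g Φ 0 ν p = -Tup g Φ 0 ν p := by
  simp [Tlow, mink]

theorem Tlow_succ_left (j : Fin n) (ν : Fin (n+1)) (p : Fin (n+1) → ℝ) :
    Tlow g Φ j.succ ν p = Tup g Φ j.succ ν p := by
  simp [Tlow, mink, Fin.succ_ne_zero]

theorem pdv_eq_zero_of_notMem_tsupport {W : Type*} [NormedAddCommGroup W] [NormedSpace ℝ W]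
    {f : (Fin (n+1) → ℝ) → W} {p : Fin (n+1) → ℝ} (hp : p ∉ tsupport f) (μ : Fin (n+1)) :
    pdv f μ p = 0 := by
  simp [pdv, fderiv_of_notMem_tsupport _ hp]

theorem Tup_eq_zero_of_notMem_tsupport {p : Fin (n+1) → ℝ} (hp : p ∉ tsupport Φ)
    (μ ν : Fin (n+1)) : Tup g Φ μ ν p = 0 := by
  simp [Tup, pdv_eq_zero_of_notMem_tsupport hp]

theorem tsupport_Tup_subset (μ ν : Fin (n+1)) : tsupport (Tup g Φ μ ν) ⊆ tsupport Φ :=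
  closure_minimal (fun _ hp => by_contra fun h => hp (Tup_eq_zero_of_notMem_tsupport h μ ν))
    (isClosed_tsupport Φ)

theorem pdv_Tup_eq_zero_of_notMem_tsupport {p : Fin (n+1) → ℝ} (hp : p ∉ tsupport Φ)
    (μ ν κ : Fin (n+1)) : pdv (Tup g Φ μ ν) κ p = 0 :=
  pdv_eq_zero_of_notMem_tsupport (fun h => hp (tsupport_Tup_subset μ ν h)) κ

theorem contDiff_Tup (hg : ∀ μ ν, ContDiff ℝ 1 (fun p => g p μ ν)) (hΦ : ContDiff ℝ 2 Φ)
    (μ ν : Fin (n+1)) : ContDiff ℝ 1 (Tup g Φ μ ν) := by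
  have hpdv : ∀ α, ContDiff ℝ 1 (pdv Φ α) := fun α =>
    (hΦ.fderiv_right (by norm_num)).clm_apply contDiff_const
  have hinner : ∀ α β, ContDiff ℝ 1 fun p => ⟪pdv Φ α p, pdv Φ β p⟫ := fun α β =>
    (hpdv α).inner ℝ (hpdv β)
  unfold Tup
  fun_prop

end EnergyTensor

theorem integrableOn_of_abs_le_of_isCompact {X : Type*} [TopologicalSpace X] [T2Space X]
    [MeasurableSpace X] [OpensMeasurableSpace X] {μ : Measure X} [IsFiniteMeasureOnCompacts μ]
    {f c : X → ℝ} {S K : Set X} (hS : MeasurableSet S) (hK : IsCompact K)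
    (hf : AEStronglyMeasurable f μ) (hc : ContinuousOn c K) (hfc : ∀ x ∈ K, |f x| ≤ c x)
    (hf0 : ∀ x ∈ S, x ∉ K → f x = 0) : IntegrableOn f S μ := by
  obtain ⟨M, hM⟩ := hK.exists_bound_of_continuousOn hc
  have hfK : IntegrableOn f K μ :=
    Measure.integrableOn_of_bounded hK.measure_lt_top.ne hf (M := M) <|
      (ae_restrict_iff' hK.measurableSet).2 <| .of_forall fun x hx =>
        (hfc x hx).trans ((le_abs_self _).trans (hM x hx))
  exact hfK.of_forall_sdiff_eq_zero hS fun x hx => hf0 x hx.1 hx.2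

theorem intervalIntegral_integral_eq_sub_of_hasDerivAt {α : Type*} [MeasurableSpace α]
    {ν : Measure α} [SFinite ν] {f f' : ℝ → α → ℝ} {a b : ℝ} (hab : a ≤ b)
    (hf : ∀ x, ∀ t ∈ Icc a b, HasDerivAt (f · x) (f' t x) t)
    (hf' : Integrable (uncurry f') ((volume.restrict (Ioc a b)).prod ν))
    (ha : Integrable (f a) ν) (hb : Integrable (f b) ν) :
    ∫ t in a..b, ∫ x, f' t x ∂ν = ∫ x, f b x ∂ν - ∫ x, f a x ∂ν := by
  rw [intervalIntegral.integral_of_le hab, integral_integral_swap hf', ← integral_sub hb ha]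
  refine integral_congr_ae ?_
  filter_upwards [hf'.prod_left_ae] with x hx
  rw [← intervalIntegral.integral_of_le hab]
  exact intervalIntegral.integral_eq_sub_of_hasDerivAt (fun t ht => hf x t (uIcc_of_le hab ▸ ht))
    ((intervalIntegrable_iff_integrableOn_Ioc_of_le hab).2 hx)

theorem integral_slab_balance {α : Type*} [MeasurableSpace α] {ν : Measure α} [SFinite ν]
    {a b : ℝ} (hab : a ≤ b) {E E' A B : ℝ → α → ℝ}
    (hE : ∀ x, ∀ t ∈ Icc a b, HasDerivAt (E · x) (E' t x) t)
    (hEa : Integrable (E a) ν) (hEb : Integrable (E b) ν)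
    (hE' : Integrable (uncurry E') ((volume.restrict (Ioc a b)).prod ν))
    (hA : Integrable (uncurry A) ((volume.restrict (Ioc a b)).prod ν))
    (hB : Integrable (uncurry B) ((volume.restrict (Ioc a b)).prod ν))
    (hbalance : ∀ t ∈ Ioc a b, Integrable (A t) ν → Integrable (B t) ν → Integrable (E' t) ν →
      (∫ x, A t x ∂ν) + (∫ x, B t x ∂ν) = -∫ x, E' t x ∂ν) :
    (∫ x, E b x ∂ν) + (∫ t in a..b, ∫ x, A t x ∂ν) + (∫ t in a..b, ∫ x, B t x ∂ν)
      = ∫ x, E a x ∂ν := by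
  have hint : ∀ {F : ℝ → α → ℝ}, Integrable (uncurry F) ((volume.restrict (Ioc a b)).prod ν) →
      IntervalIntegrable (fun t => ∫ x, F t x ∂ν) volume a b := fun hF =>
    (intervalIntegrable_iff_integrableOn_Ioc_of_le hab).2 hF.integral_prod_left
  have hslices : ∀ᵐ t, t ∈ Ι a b →
      (∫ x, A t x ∂ν) + (∫ x, B t x ∂ν) = -∫ x, E' t x ∂ν := by
    rw [uIoc_of_le hab, ← ae_restrict_iff' measurableSet_Ioc]
    filter_upwards [hA.prod_right_ae, hB.prod_right_ae, hE'.prod_right_ae,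
      ae_restrict_mem measurableSet_Ioc] with t hAt hBt hE't ht
    exact hbalance t ht hAt hBt hE't
  rw [add_assoc, ← intervalIntegral.integral_add (hint hA) (hint hB),
    intervalIntegral.integral_congr_ae hslices, intervalIntegral.integral_neg,
    intervalIntegral_integral_eq_sub_of_hasDerivAt hab hE hE' hEa hEb]
  ring

theorem integral_divergence_eq_zero_of_hasCompactSupport {n : ℕ}
    {f : Fin n → (Fin n → ℝ) → ℝ} {s : Set (Fin n → ℝ)} (hs : s.Countable)
    (hf : ∀ j, Continuous (f j)) (hfc : ∀ j, HasCompactSupport (f j))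
    (hf' : ∀ x ∉ s, ∀ j, DifferentiableAt ℝ (f j) x)
    (hi : Integrable fun x => ∑ j, fderiv ℝ (f j) x (Pi.single j 1)) :
    ∫ x, ∑ j, fderiv ℝ (f j) x (Pi.single j 1) = 0 := by
  cases n with
  | zero => simp
  | succ m =>
  obtain ⟨R, hR⟩ := (isCompact_iUnion hfc).isBounded.subset_closedBall 0
  have hvanish : ∀ x : Fin (m+1) → ℝ, ∀ i, R < |x i| → ∀ j, x ∉ tsupport (f j) := by
    intro x i hx j hxj
    have := mem_closedBall_zero_iff.1 (hR (mem_iUnion.2 ⟨j, hxj⟩))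
    exact (hx.trans_le (norm_le_pi_norm x i)).not_ge this
  have hR1 : R < |R| + 1 := (le_abs_self R).trans_lt (lt_add_one _)
  set a : Fin (m+1) → ℝ := fun _ => -(|R| + 1)
  set b : Fin (m+1) → ℝ := fun _ => |R| + 1
  have hab : a ≤ b := fun _ => by simp only [a, b]; linarith [abs_nonneg R]
  have hbox := integral_divergence_of_hasFDerivAt_off_countable' a b hab f
    (fun j x => fderiv ℝ (f j) x) s hs (fun j => (hf j).continuousOn)
    (fun x hx j => (hf' x hx.2 j).hasFDerivAt) hi.integrableOn
  have hfaces : ∀ i, ∀ c, R < |c| → ∀ y, f i (i.insertNth c y) = 0 := fun i c hc y =>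
    image_eq_zero_of_notMem_tsupport (hvanish _ i (by simpa using hc) i)
  have hab_abs : |a 0| = |R| + 1 ∧ |b 0| = |R| + 1 := by
    simp only [a, b, abs_neg, abs_of_pos (by positivity : 0 < |R| + 1), and_self]
  simp only [hfaces _ (a _) (hab_abs.1 ▸ hR1), hfaces _ (b _) (hab_abs.2 ▸ hR1), integral_zero,
    sub_zero, Finset.sum_const_zero] at hbox
  rw [← hbox, setIntegral_eq_integral_of_ae_compl_eq_zero]
  refine .of_forall fun x hx => ?_
  obtain ⟨i, hi⟩ : ∃ i, R < |x i| := by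
    by_contra! hle
    exact hx ⟨fun i => by simp only [a]; linarith [neg_abs_le (x i), hle i, neg_abs_le R],
      fun i => by simp only [b]; linarith [le_abs_self (x i), hle i, le_abs_self R]⟩
  simp [fderiv_of_notMem_tsupport _ (hvanish x i hi _)]

section Slab

variable {n : ℕ} {S : Set (Fin (n+1) → ℝ)} {t₁ t₂ : ℝ}

theorem hasCompactSupport_of_slab (hS : IsCompact (S ∩ {p | t₁ ≤ p 0 ∧ p 0 ≤ t₂}))
    {τ : ℝ} (hτ : τ ∈ Icc t₁ t₂) {F : (Fin n → ℝ) → ℝ}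
    (hF : ∀ x, Fin.cons τ x ∉ S → F x = 0) : HasCompactSupport F :=
  .intro ((isCompact_setOf_finCons_mem hS).image continuous_snd) fun x hx =>
    hF x fun hxS => hx ⟨(τ, x), ⟨hxS, by simpa using hτ⟩, rfl⟩

theorem integrable_slab_of_abs_le (hS : IsCompact (S ∩ {p | t₁ ≤ p 0 ∧ p 0 ≤ t₂}))
    {F c : ℝ × (Fin n → ℝ) → ℝ} (hF : AEStronglyMeasurable F (volume.prod volume))
    (hc : Continuous c) (hFc : ∀ q, |F q| ≤ c q)
    (hF0 : ∀ τ ∈ Icc t₁ t₂, ∀ x, Fin.cons τ x ∉ S → F (τ, x) = 0) :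
    Integrable F ((volume.restrict (Ioc t₁ t₂)).prod volume) := by
  rw [← Measure.restrict_univ (μ := (volume : Measure (Fin n → ℝ))), Measure.prod_restrict]
  refine integrableOn_of_abs_le_of_isCompact (measurableSet_Ioc.prod .univ)
    (isCompact_setOf_finCons_mem hS) hF hc.continuousOn (fun q _ => hFc q) ?_
  rintro ⟨τ, x⟩ ⟨hτ, -⟩ hq
  have hτ' := Ioc_subset_Icc_self hτ
  exact hF0 τ hτ' x fun hxS => hq ⟨hxS, by simpa using hτ'⟩

end Slab

section WeightedEnergy

variable {n : ℕ} {V : Type*} [NormedAddCommGroup V] [InnerProductSpace ℝ V]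
  (g : (Fin (n+1) → ℝ) → Fin (n+1) → Fin (n+1) → ℝ) (Φ : (Fin (n+1) → ℝ) → V) (ω : ℝ → ℝ)

def weightedEnergy (τ : ℝ) (x : Fin n → ℝ) : ℝ :=
  Tlow g Φ 0 0 (Fin.cons τ x) * ω (rad n x - τ)

def weightedEnergyRate (τ : ℝ) (x : Fin n → ℝ) : ℝ :=
  -(pdv (Tup g Φ 0 0) 0 (Fin.cons τ x) * ω (rad n x - τ))
    + Tup g Φ 0 0 (Fin.cons τ x) * deriv ω (rad n x - τ)

def weightedFlux (τ : ℝ) (j : Fin n) (x : Fin n → ℝ) : ℝ :=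
  Tup g Φ j.succ 0 (Fin.cons τ x) * ω (rad n x - τ)

/-- `∑ⱼ ∂ⱼ (T^j_0(Φ) ω(|x| - τ))` on the slice `t = τ`, valid for `x ≠ 0`. -/
def weightedFluxDiv (τ : ℝ) (x : Fin n → ℝ) : ℝ :=
  ∑ j, (pdv (Tup g Φ j.succ 0) j.succ (Fin.cons τ x) * ω (rad n x - τ)
    + Tup g Φ j.succ 0 (Fin.cons τ x) * deriv ω (rad n x - τ) * (x j / rad n x))

theorem weighted_energy_identity (τ : ℝ) (x : Fin n → ℝ) :
    (Tlow g Φ 0 0 (Fin.cons τ x)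
        + ∑ j : Fin n, (x j / rad n x) * Tlow g Φ j.succ 0 (Fin.cons τ x))
      * deriv ω (rad n x - τ)
    + (∑ μ, pdv (Tup g Φ μ 0) μ (Fin.cons τ x)) * ω (rad n x - τ)
    = -weightedEnergyRate g Φ ω τ x + weightedFluxDiv g Φ ω τ x := by
  have hradial : (∑ j : Fin n, (x j / rad n x) * Tlow g Φ j.succ 0 (Fin.cons τ x))
      * deriv ω (rad n x - τ)
      = ∑ j, Tup g Φ j.succ 0 (Fin.cons τ x) * deriv ω (rad n x - τ) * (x j / rad n x) := by
    rw [Finset.sum_mul]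
    exact Finset.sum_congr rfl fun j _ => by rw [Tlow_succ_left]; ring
  rw [add_mul, hradial, Fin.sum_univ_succ, add_mul, Finset.sum_mul]
  simp only [weightedEnergyRate, weightedFluxDiv, Tlow_zero_left, Finset.sum_add_distrib]
  ring

variable {g Φ ω} {t₁ t₂ : ℝ}

theorem hasDerivAt_weightedEnergy (hT : Differentiable ℝ (Tup g Φ 0 0))
    (hω : Differentiable ℝ ω) (x : Fin n → ℝ) (τ : ℝ) :
    HasDerivAt (weightedEnergy g Φ ω · x) (weightedEnergyRate g Φ ω τ x) τ := by
  have hTτ : HasDerivAt (fun s => Tlow g Φ 0 0 (Fin.cons s x))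
      (-pdv (Tup g Φ 0 0) 0 (Fin.cons τ x)) τ := by
    simp only [Tlow_zero_left]
    exact ((hT _).hasFDerivAt.comp_hasDerivAt τ (hasDerivAt_finCons_left x τ)).neg
  have hωτ : HasDerivAt (fun s => ω (rad n x - s)) (-deriv ω (rad n x - τ)) τ := by
    simpa [Function.comp_def] using
      (hω _).hasDerivAt.comp τ ((hasDerivAt_id τ).const_sub (rad n x))
  exact (hTτ.mul hωτ).congr_deriv (by simp only [weightedEnergyRate, Tlow_zero_left]; ring)

theorem hasFDerivAt_weightedFlux (τ : ℝ) (j : Fin n) {x : Fin n → ℝ}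
    (hT : DifferentiableAt ℝ (Tup g Φ j.succ 0) (Fin.cons τ x))
    (hω : DifferentiableAt ℝ ω (rad n x - τ)) (hx : x ≠ 0) :
    HasFDerivAt (weightedFlux g Φ ω τ j)
      (Tup g Φ j.succ 0 (Fin.cons τ x) • deriv ω (rad n x - τ) • (rad n x)⁻¹ •
          ∑ i, x i • ContinuousLinearMap.proj (R := ℝ) (φ := fun _ : Fin n => ℝ) i
        + ω (rad n x - τ) • (fderiv ℝ (Tup g Φ j.succ 0) (Fin.cons τ x)).comp
          ((0 : (Fin n → ℝ) →L[ℝ] ℝ).finCons (ContinuousLinearMap.id ℝ _))) x :=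
  (hT.hasFDerivAt.comp x ((hasFDerivAt_const τ x).finCons (hasFDerivAt_id x))).mul
    (hω.hasDerivAt.comp_hasFDerivAt x ((hasFDerivAt_rad hx).sub_const τ))

theorem fderiv_weightedFlux_single (τ : ℝ) (j : Fin n) {x : Fin n → ℝ}
    (hT : DifferentiableAt ℝ (Tup g Φ j.succ 0) (Fin.cons τ x))
    (hω : DifferentiableAt ℝ ω (rad n x - τ)) (hx : x ≠ 0) :
    fderiv ℝ (weightedFlux g Φ ω τ j) x (Pi.single j 1)
      = pdv (Tup g Φ j.succ 0) j.succ (Fin.cons τ x) * ω (rad n x - τ)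
        + Tup g Φ j.succ 0 (Fin.cons τ x) * deriv ω (rad n x - τ) * (x j / rad n x) := by
  rw [(hasFDerivAt_weightedFlux τ j hT hω hx).fderiv]
  have hcons : (Fin.consEquivL ℝ fun _ : Fin (n+1) => ℝ) (0, Pi.single j 1)
      = basisVec n j.succ :=
    finCons_zero_single j
  simp [hcons, pdv, Pi.single_apply]
  ring

theorem integrable_weightedEnergy (hT : ∀ μ ν, ContDiff ℝ 1 (Tup g Φ μ ν))
    (hω : ContDiff ℝ 1 ω) (hsupp : IsCompact (tsupport Φ ∩ {p | t₁ ≤ p 0 ∧ p 0 ≤ t₂}))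
    {τ : ℝ} (hτ : τ ∈ Icc t₁ t₂) :
    Integrable (weightedEnergy g Φ ω τ) := by
  have := fun μ ν => (hT μ ν).continuous
  have := hω.continuous
  have := continuous_rad (n := n)
  refine Continuous.integrable_of_hasCompactSupport (by unfold weightedEnergy Tlow; fun_prop)
    (hasCompactSupport_of_slab hsupp hτ fun x hx => ?_)
  simp [weightedEnergy, Tlow, Tup_eq_zero_of_notMem_tsupport hx]

theorem integrable_weightedEnergyRate (hT : ∀ μ ν, ContDiff ℝ 1 (Tup g Φ μ ν))
    (hω : ContDiff ℝ 1 ω) (hsupp : IsCompact (tsupport Φ ∩ {p | t₁ ≤ p 0 ∧ p 0 ≤ t₂})) :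
    Integrable (uncurry (weightedEnergyRate g Φ ω))
      ((volume.restrict (Ioc t₁ t₂)).prod volume) := by
  have := (hT 0 0).continuous
  have := (hT 0 0).continuous_fderiv one_ne_zero
  have := hω.continuous
  have := hω.continuous_deriv le_rfl
  have := continuous_rad (n := n)
  have hc : Continuous (uncurry (weightedEnergyRate g Φ ω)) := by
    unfold weightedEnergyRate pdv; fun_prop
  refine integrable_slab_of_abs_le hsupp hc.aestronglyMeasurable hc.abs (fun _ => le_rfl)
    fun τ _ x hx => ?_
  simp [weightedEnergyRate, Tup_eq_zero_of_notMem_tsupport hx,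
    pdv_Tup_eq_zero_of_notMem_tsupport hx]

theorem integrable_divergence_term (hT : ∀ μ ν, ContDiff ℝ 1 (Tup g Φ μ ν))
    (hω : ContDiff ℝ 1 ω) (hsupp : IsCompact (tsupport Φ ∩ {p | t₁ ≤ p 0 ∧ p 0 ≤ t₂})) :
    Integrable (uncurry fun τ x => (∑ μ, pdv (Tup g Φ μ 0) μ (Fin.cons τ x)) * ω (rad n x - τ))
      ((volume.restrict (Ioc t₁ t₂)).prod volume) := by
  have := fun μ => (hT μ 0).continuous_fderiv one_ne_zero
  have := hω.continuous
  have := continuous_rad (n := n)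
  have hc : Continuous (uncurry fun τ x =>
      (∑ μ, pdv (Tup g Φ μ 0) μ (Fin.cons τ x)) * ω (rad n x - τ)) := by
    unfold pdv; fun_prop
  refine integrable_slab_of_abs_le hsupp hc.aestronglyMeasurable hc.abs (fun _ => le_rfl)
    fun τ _ x hx => ?_
  simp [pdv_Tup_eq_zero_of_notMem_tsupport hx]

theorem integrable_radial_term (hT : ∀ μ ν, ContDiff ℝ 1 (Tup g Φ μ ν))
    (hω : ContDiff ℝ 1 ω) (hsupp : IsCompact (tsupport Φ ∩ {p | t₁ ≤ p 0 ∧ p 0 ≤ t₂})) :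
    Integrable (uncurry fun τ x =>
        (Tlow g Φ 0 0 (Fin.cons τ x)
          + ∑ j : Fin n, (x j / rad n x) * Tlow g Φ j.succ 0 (Fin.cons τ x))
        * deriv ω (rad n x - τ))
      ((volume.restrict (Ioc t₁ t₂)).prod volume) := by
  have := fun μ ν => (hT μ ν).continuous
  have := hω.continuous_deriv le_rfl
  have := continuous_rad (n := n)
  have hm : Measurable (uncurry fun τ x =>
      (Tlow g Φ 0 0 (Fin.cons τ x)
        + ∑ j : Fin n, (x j / rad n x) * Tlow g Φ j.succ 0 (Fin.cons τ x))
        * deriv ω (rad n x - τ)) := by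
    unfold Tlow; fun_prop
  refine integrable_slab_of_abs_le hsupp hm.aestronglyMeasurable
    (c := fun q => (|Tlow g Φ 0 0 (Fin.cons q.1 q.2)|
      + ∑ j : Fin n, |Tlow g Φ j.succ 0 (Fin.cons q.1 q.2)|) * |deriv ω (rad n q.2 - q.1)|)
    (by unfold Tlow; fun_prop) (fun q => ?_) fun τ _ x hx => ?_
  · rw [uncurry_def, abs_mul]
    refine mul_le_mul_of_nonneg_right ((abs_add_le _ _).trans (add_le_add_right ?_ _))
      (abs_nonneg _)
    refine (Finset.abs_sum_le_sum_abs _ _).trans (Finset.sum_le_sum fun j _ => ?_)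
    rw [abs_mul]
    exact mul_le_of_le_one_left (abs_nonneg _) (abs_div_rad_le_one _ j)
  · simp [Tlow, Tup_eq_zero_of_notMem_tsupport hx]

theorem integral_weightedFluxDiv_eq_zero (hT : ∀ μ ν, ContDiff ℝ 1 (Tup g Φ μ ν))
    (hω : ContDiff ℝ 1 ω) (hsupp : IsCompact (tsupport Φ ∩ {p | t₁ ≤ p 0 ∧ p 0 ≤ t₂}))
    {τ : ℝ} (hτ : τ ∈ Icc t₁ t₂) (hD : Integrable (weightedFluxDiv g Φ ω τ)) :
    ∫ x, weightedFluxDiv g Φ ω τ x = 0 := by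
  -- For `n = 0` the origin is not a null set, but the divergence is an empty sum.
  cases n with
  | zero => simp [weightedFluxDiv]
  | succ m =>
  have hTd : ∀ μ ν, Differentiable ℝ (Tup g Φ μ ν) := fun μ ν =>
    (hT μ ν).differentiable one_ne_zero
  have hωd := hω.differentiable one_ne_zero
  have hdiv : ∀ x ≠ 0, ∑ j, fderiv ℝ (weightedFlux g Φ ω τ j) x (Pi.single j 1)
      = weightedFluxDiv g Φ ω τ x := fun x hx =>
    Finset.sum_congr rfl fun j _ => fderiv_weightedFlux_single τ j (hTd _ _ _) (hωd _) hx
  have hae : (fun x => ∑ j, fderiv ℝ (weightedFlux g Φ ω τ j) x (Pi.single j 1))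
      =ᵐ[volume] weightedFluxDiv g Φ ω τ := by
    filter_upwards [(countable_singleton (0 : Fin (m+1) → ℝ)).ae_notMem volume] with x hx
    exact hdiv x hx
  have := fun μ ν => (hT μ ν).continuous
  have := hω.continuous
  have := continuous_rad (n := m + 1)
  rw [← integral_congr_ae hae]
  refine integral_divergence_eq_zero_of_hasCompactSupport (countable_singleton 0)
    (fun j => by unfold weightedFlux; fun_prop)
    (fun j => hasCompactSupport_of_slab hsupp hτ fun x hx => ?_)
    (fun x hx j => (hasFDerivAt_weightedFlux τ j (hTd _ _ _) (hωd _) hx).differentiableAt)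
    (hD.congr hae.symm)
  simp [weightedFlux, Tup_eq_zero_of_notMem_tsupport hx]

theorem integral_radial_add_integral_divergence (hT : ∀ μ ν, ContDiff ℝ 1 (Tup g Φ μ ν))
    (hω : ContDiff ℝ 1 ω) (hsupp : IsCompact (tsupport Φ ∩ {p | t₁ ≤ p 0 ∧ p 0 ≤ t₂}))
    {τ : ℝ} (hτ : τ ∈ Icc t₁ t₂)
    (hA : Integrable fun x : Fin n → ℝ =>
      (Tlow g Φ 0 0 (Fin.cons τ x)
        + ∑ j : Fin n, (x j / rad n x) * Tlow g Φ j.succ 0 (Fin.cons τ x))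
        * deriv ω (rad n x - τ))
    (hB : Integrable fun x : Fin n → ℝ =>
      (∑ μ, pdv (Tup g Φ μ 0) μ (Fin.cons τ x)) * ω (rad n x - τ))
    (hE' : Integrable (weightedEnergyRate g Φ ω τ)) :
    (∫ x, (Tlow g Φ 0 0 (Fin.cons τ x)
        + ∑ j : Fin n, (x j / rad n x) * Tlow g Φ j.succ 0 (Fin.cons τ x))
        * deriv ω (rad n x - τ))
      + (∫ x, (∑ μ, pdv (Tup g Φ μ 0) μ (Fin.cons τ x)) * ω (rad n x - τ))
      = -∫ x, weightedEnergyRate g Φ ω τ x := by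
  have hD : Integrable (weightedFluxDiv g Φ ω τ) :=
    ((hA.add hB).add hE').congr <| .of_forall fun x => by
      simp only [Pi.add_apply, weighted_energy_identity]; ring
  rw [← integral_add hA hB, integral_congr_ae (.of_forall (weighted_energy_identity g Φ ω τ)),
    integral_add (f := fun x => -weightedEnergyRate g Φ ω τ x) hE'.neg hD, integral_neg,
    integral_weightedFluxDiv_eq_zero hT hω hsupp hτ hD, add_zero]

end WeightedEnergy

theorem stmt16_general {n : ℕ} {V : Type*} [NormedAddCommGroup V] [InnerProductSpace ℝ V]
    (g : (Fin (n+1) → ℝ) → Fin (n+1) → Fin (n+1) → ℝ)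
    (hg : ∀ μ ν, ContDiff ℝ 1 (fun p => g p μ ν))
    (Φ : (Fin (n+1) → ℝ) → V) (hΦ : ContDiff ℝ 2 Φ)
    (ω : ℝ → ℝ) (hω : ContDiff ℝ 1 ω)
    (t₁ t₂ : ℝ) (ht : t₁ ≤ t₂)
    (hsupp : IsCompact (tsupport Φ ∩ {p : Fin (n+1) → ℝ | t₁ ≤ p 0 ∧ p 0 ≤ t₂})) :
    (∫ x : Fin n → ℝ, Tlow g Φ 0 0 (Fin.cons t₂ x) * ω (rad n x - t₂))
      + (∫ τ in t₁..t₂, ∫ x : Fin n → ℝ,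
          (Tlow g Φ 0 0 (Fin.cons τ x)
              + ∑ j : Fin n, (x j / rad n x) * Tlow g Φ j.succ 0 (Fin.cons τ x))
            * deriv ω (rad n x - τ))
      + (∫ τ in t₁..t₂, ∫ x : Fin n → ℝ,
          (∑ μ, pdv (Tup g Φ μ 0) μ (Fin.cons τ x)) * ω (rad n x - τ))
      = ∫ x : Fin n → ℝ, Tlow g Φ 0 0 (Fin.cons t₁ x) * ω (rad n x - t₁) := by
  have hT := contDiff_Tup hg hΦ
  exact integral_slab_balance ht (E := weightedEnergy g Φ ω)
    (fun x τ _ => hasDerivAt_weightedEnergy ((hT 0 0).differentiable one_ne_zero)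
      (hω.differentiable one_ne_zero) x τ)
    (integrable_weightedEnergy hT hω hsupp ⟨le_rfl, ht⟩)
    (integrable_weightedEnergy hT hω hsupp ⟨ht, le_rfl⟩)
    (integrable_weightedEnergyRate hT hω hsupp) (integrable_radial_term hT hω hsupp)
    (integrable_divergence_term hT hω hsupp)
    fun τ hτ => integral_radial_add_integral_divergence hT hω hsupp (Ioc_subset_Icc_self hτ)

/-- weighted conservation law on a time slab, for spatially
compactly supported fields and a C¹ weight ω. -/
theorem stmt16 {n : ℕ} (hn : 2 ≤ n) {V : Type*} [NormedAddCommGroup V] [InnerProductSpace ℝ V]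
    (g : (Fin (n+1) → ℝ) → Fin (n+1) → Fin (n+1) → ℝ)
    (hgsymm : ∀ p μ ν, g p μ ν = g p ν μ)
    (hg : ∀ μ ν, ContDiff ℝ 1 (fun p => g p μ ν))
    (Φ : (Fin (n+1) → ℝ) → V) (hΦ : ContDiff ℝ 2 Φ)
    (ω : ℝ → ℝ) (hω : ContDiff ℝ 1 ω)
    (t₁ t₂ : ℝ) (ht : t₁ ≤ t₂)
    (hsupp : IsCompact (tsupport Φ ∩ {p : Fin (n+1) → ℝ | t₁ ≤ p 0 ∧ p 0 ≤ t₂})) :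
    (∫ x : Fin n → ℝ, Tlow g Φ 0 0 (Fin.cons t₂ x) * ω (rad n x - t₂))
      + (∫ τ in t₁..t₂, ∫ x : Fin n → ℝ,
          (Tlow g Φ 0 0 (Fin.cons τ x)
              + ∑ j : Fin n, (x j / rad n x) * Tlow g Φ j.succ 0 (Fin.cons τ x))
            * deriv ω (rad n x - τ))
      + (∫ τ in t₁..t₂, ∫ x : Fin n → ℝ,
          (∑ μ, pdv (Tup g Φ μ 0) μ (Fin.cons τ x)) * ω (rad n x - τ))
      = ∫ x : Fin n → ℝ, Tlow g Φ 0 0 (Fin.cons t₁ x) * ω (rad n x - t₁) :=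
  stmt16_general g hg Φ hΦ ω hω t₁ t₂ ht hsupp
end
end
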